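/- arXiv:1905.10721 — 2 statements merged into one kernel-verified Lean document; each statement's English description precedes it below -/
import Mathlib

section
/- Suppose the norm ν on E is order continuous. Then ρ has the Fatou property on E^t: for every nonempty upward-directed set D of positive elements of E^t whose supremum in G is an element x ∈ E^t, one has sup{ρ(d) : d ∈ D} = ρ(x). -/
/-!
Monotonicity of `ρ` gives `sup ρ(D) ≤ ρ(x)`. Conversely fix `z ∈ E` with `0 ≤ z ≤ x`. As `d` runs
through `D`, the parts `z - z ⊓ d` of `z` not covered by `d` decrease to `0`, and by order density
and the Archimedean property each of them is the infimum of its majorants in `E`; so these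
majorants form a downward directed subset of `E` with infimum `0`, and order continuity of `ν`
yields `d ∈ D` and `w ∈ E` with `z - z ⊓ d ≤ w` and `ν w < ε`. For every `y ∈ E` above `z ⊓ d`,
splitting `z = y ⊓ z + (z - y ⊓ z)` gives `ν z ≤ ν y + ν w`, hence
`ν z ≤ ι (z ⊓ d) + ε = ρ (z ⊓ d) + ε ≤ ρ d + ε`, where `z ⊓ d ∈ E^t` is used for `ι = ρ`.
-/

open Set

section LatticeGroup

variable {G : Type*} [Lattice G] [AddCommGroup G] [AddLeftMono G]

theorem isGLB_majorants_of_orderDense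
    (arch : ∀ x y : G, (∀ n : ℕ, n • x ≤ y) → x ≤ 0)
    {E : Set G} (hEsub : ∀ x ∈ E, ∀ y ∈ E, x - y ∈ E)
    (hdense : ∀ x : G, 0 < x → ∃ y ∈ E, 0 < y ∧ y ≤ x)
    {v : G} (hv : ∃ y ∈ E, v ≤ y) : IsGLB {y | y ∈ E ∧ v ≤ y} v := by
  refine ⟨fun y hy => hy.2, fun b hb => ?_⟩
  by_contra hbv
  obtain ⟨y₀, hy₀E, hvy₀⟩ := hv
  obtain ⟨e, heE, he0, heb⟩ : ∃ e ∈ E, 0 < e ∧ e ≤ (b - v) ⊔ 0 :=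
    hdense _ (lt_of_le_of_ne le_sup_right fun h => hbv (sub_nonpos.mp (le_sup_left.trans h.ge)))
  -- a majorant `y` of `v` lies above `b`, so `y - v ≥ (b - v) ⊔ 0 ≥ e`: `y - e` is again a majorant
  have step : ∀ y ∈ E, v ≤ y → y - e ∈ E ∧ v ≤ y - e := fun y hyE hvy =>
    ⟨hEsub y hyE e heE, le_sub_comm.mp
      (heb.trans (sup_le (sub_le_sub_right (hb ⟨hyE, hvy⟩) v) (sub_nonneg.mpr hvy)))⟩
  have iter : ∀ n : ℕ, y₀ - n • e ∈ E ∧ v ≤ y₀ - n • e := by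
    intro n
    induction n with
    | zero => simpa using ⟨hy₀E, hvy₀⟩
    | succ n ih => simpa [succ_nsmul, sub_add_eq_sub_sub] using step _ ih.1 ih.2
  exact he0.not_ge (arch e (y₀ - v) fun n => le_sub_comm.mp (iter n).2)

theorem isGLB_sub_inf_of_isLUB {D : Set G} {x z : G} (hD : IsLUB D x) (hzx : z ≤ x) :
    IsGLB ((fun d => z - z ⊓ d) '' D) 0 := by
  refine ⟨?_, fun b hb => ?_⟩
  · rintro _ ⟨d, -, rfl⟩
    exact sub_nonneg.mpr inf_le_left
  · refine (le_sub_self_iff x).mp (hD.2 fun d hd => ?_)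
    have hlow : z + d - x ≤ z ⊓ d := le_inf
      (sub_le_iff_le_add.mpr (by simpa [add_comm] using add_le_add_left (hD.1 hd) z))
      (sub_le_iff_le_add.mpr (by simpa [add_comm] using add_le_add_right hzx d))
    have hup : z ⊓ d ≤ z - b := le_sub_comm.mp (hb ⟨d, hd, rfl⟩)
    calc d = z + d - x - z + x := by abel
      _ ≤ z - b - z + x := add_le_add_left (sub_le_sub_right (hlow.trans hup) z) x
      _ = x - b := by abel

def uncoveredMajorants (E D : Set G) (z : G) : Set G :=
  {w | w ∈ E ∧ ∃ d ∈ D, z - z ⊓ d ≤ w}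

theorem isGLB_uncoveredMajorants
    (arch : ∀ x y : G, (∀ n : ℕ, n • x ≤ y) → x ≤ 0)
    {E : Set G} (hEsub : ∀ x ∈ E, ∀ y ∈ E, x - y ∈ E)
    (hdense : ∀ x : G, 0 < x → ∃ y ∈ E, 0 < y ∧ y ≤ x)
    (hmaj : ∀ x : G, ∃ y ∈ E, x ≤ y)
    {D : Set G} {x z : G} (hD : IsLUB D x) (hzx : z ≤ x) :
    IsGLB (uncoveredMajorants E D z) 0 := by
  have hgap := isGLB_sub_inf_of_isLUB hD hzx
  refine ⟨?_, fun b hb => hgap.2 ?_⟩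
  · rintro w ⟨-, d, hd, hw⟩
    exact (hgap.1 ⟨d, hd, rfl⟩).trans hw
  · rintro _ ⟨d, hd, rfl⟩
    exact (isGLB_majorants_of_orderDense arch hEsub hdense (hmaj _)).2
      fun y ⟨hyE, hy⟩ => hb ⟨hyE, d, hd, hy⟩

theorem directedOn_uncoveredMajorants {E : Set G} (hEinf : ∀ x ∈ E, ∀ y ∈ E, x ⊓ y ∈ E)
    {D : Set G} (hDdir : DirectedOn (· ≤ ·) D) (z : G) :
    DirectedOn (· ≥ ·) (uncoveredMajorants E D z) := by
  rintro w₁ ⟨hw₁E, d₁, hd₁, hw₁⟩ w₂ ⟨hw₂E, d₂, hd₂, hw₂⟩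
  obtain ⟨d, hd, hd₁d, hd₂d⟩ := hDdir d₁ hd₁ d₂ hd₂
  refine ⟨w₁ ⊓ w₂, ⟨hEinf _ hw₁E _ hw₂E, d, hd, le_inf ?_ ?_⟩, inf_le_left, inf_le_right⟩
  · exact (sub_le_sub_left (inf_le_inf_left z hd₁d) z).trans hw₁
  · exact (sub_le_sub_left (inf_le_inf_left z hd₂d) z).trans hw₂

end LatticeGroup

section LatticeNorm

variable {G : Type*} [Lattice G] [AddCommGroup G] [AddLeftMono G]

/-- `ρ` of the statement. -/
noncomputable def lowerNorm (E : Set G) (ν : G → ℝ) (x : G) : ℝ :=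
  sSup (ν '' {z | z ∈ E ∧ 0 ≤ z ∧ z ≤ |x|})

/-- `ι` of the statement. -/
noncomputable def upperNorm (E : Set G) (ν : G → ℝ) (x : G) : ℝ :=
  sInf (ν '' {y | y ∈ E ∧ |x| ≤ y})

theorem lowerNorm_le_lowerNorm {E : Set G} {ν : G → ℝ} (hE0 : (0 : G) ∈ E)
    (hmaj : ∀ x : G, ∃ y ∈ E, x ≤ y) (hν_mono : ∀ x ∈ E, ∀ y ∈ E, |x| ≤ |y| → ν x ≤ ν y)
    {a b : G} (hab : |a| ≤ |b|) : lowerNorm E ν a ≤ lowerNorm E ν b := by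
  obtain ⟨y, hyE, hby⟩ := hmaj |b|
  refine csSup_le_csSup ⟨ν y, ?_⟩ ⟨ν 0, 0, ⟨hE0, le_rfl, abs_nonneg a⟩, rfl⟩
    (image_mono fun z ⟨hzE, hz0, hza⟩ => ⟨hzE, hz0, hza.trans hab⟩)
  rintro _ ⟨z, ⟨hzE, hz0, hzb⟩, rfl⟩
  exact hν_mono z hzE y hyE (abs_le_abs_of_nonneg hz0 (hzb.trans hby))

theorem le_add_of_le_inf {E : Set G} {ν : G → ℝ}
    (hEsub : ∀ x ∈ E, ∀ y ∈ E, x - y ∈ E) (hEinf : ∀ x ∈ E, ∀ y ∈ E, x ⊓ y ∈ E)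
    (hν_add : ∀ x ∈ E, ∀ y ∈ E, ν (x + y) ≤ ν x + ν y)
    (hν_mono : ∀ x ∈ E, ∀ y ∈ E, |x| ≤ |y| → ν x ≤ ν y)
    {u y z w : G} (hyE : y ∈ E) (hzE : z ∈ E) (hwE : w ∈ E)
    (hu0 : 0 ≤ u) (huyz : u ≤ y ⊓ z) (hzw : z - u ≤ w) : ν z ≤ ν y + ν w := by
  have hyzE : y ⊓ z ∈ E := hEinf y hyE z hzE
  calc ν z = ν (y ⊓ z + (z - y ⊓ z)) := by rw [add_sub_cancel]
    _ ≤ ν (y ⊓ z) + ν (z - y ⊓ z) := hν_add _ hyzE _ (hEsub z hzE _ hyzE)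
    _ ≤ ν y + ν w := add_le_add
      (hν_mono _ hyzE _ hyE (abs_le_abs_of_nonneg (hu0.trans huyz) inf_le_left))
      (hν_mono _ (hEsub z hzE _ hyzE) _ hwE (abs_le_abs_of_nonneg
        (sub_nonneg.mpr inf_le_right) ((sub_le_sub_left huyz z).trans hzw)))

theorem le_upperNorm_add {E : Set G} {ν : G → ℝ}
    (hEsub : ∀ x ∈ E, ∀ y ∈ E, x - y ∈ E) (hEinf : ∀ x ∈ E, ∀ y ∈ E, x ⊓ y ∈ E)
    (hν_add : ∀ x ∈ E, ∀ y ∈ E, ν (x + y) ≤ ν x + ν y)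
    (hν_mono : ∀ x ∈ E, ∀ y ∈ E, |x| ≤ |y| → ν x ≤ ν y)
    {u z w : G} (hzE : z ∈ E) (hwE : w ∈ E) (hu0 : 0 ≤ u) (huz : u ≤ z) (hzw : z - u ≤ w) :
    ν z ≤ upperNorm E ν u + ν w := by
  rw [← sub_le_iff_le_add]
  refine le_csInf ⟨ν z, z, ⟨hzE, (abs_of_nonneg hu0).le.trans huz⟩, rfl⟩ ?_
  rintro _ ⟨y, ⟨hyE, huy⟩, rfl⟩
  rw [abs_of_nonneg hu0] at huy
  exact sub_le_iff_le_add.mpr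
    (le_add_of_le_inf hEsub hEinf hν_add hν_mono hyE hzE hwE hu0 (le_inf huy huz) hzw)

theorem exists_mem_uncoveredMajorants_lt
    (arch : ∀ x y : G, (∀ n : ℕ, n • x ≤ y) → x ≤ 0)
    {E : Set G} (hEsub : ∀ x ∈ E, ∀ y ∈ E, x - y ∈ E) (hEinf : ∀ x ∈ E, ∀ y ∈ E, x ⊓ y ∈ E)
    (hdense : ∀ x : G, 0 < x → ∃ y ∈ E, 0 < y ∧ y ≤ x)
    (hmaj : ∀ x : G, ∃ y ∈ E, x ≤ y) {ν : G → ℝ}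
    (hoc : ∀ D : Set G, D.Nonempty → D ⊆ E → (∀ d ∈ D, 0 ≤ d) →
      DirectedOn (· ≥ ·) D → IsGLB D 0 → sInf (ν '' D) = 0)
    {D : Set G} (hDne : D.Nonempty) (hDdir : DirectedOn (· ≤ ·) D)
    {x z : G} (hD : IsLUB D x) (hzx : z ≤ x) {ε : ℝ} (hε : 0 < ε) :
    ∃ w ∈ uncoveredMajorants E D z, ν w < ε := by
  have hglb := isGLB_uncoveredMajorants arch hEsub hdense hmaj hD hzx
  have hne : (uncoveredMajorants E D z).Nonempty := by
    obtain ⟨d, hd⟩ := hDne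
    obtain ⟨y, hyE, hy⟩ := hmaj (z - z ⊓ d)
    exact ⟨y, hyE, d, hd, hy⟩
  have hinf := hoc _ hne (fun w hw => hw.1) (fun w hw => hglb.1 hw)
    (directedOn_uncoveredMajorants hEinf hDdir z) hglb
  obtain ⟨_, ⟨w, hw, rfl⟩, hwε⟩ := exists_lt_of_csInf_lt (hne.image ν) (hinf ▸ hε)
  exact ⟨w, hw, hwε⟩

theorem lowerNorm_le_sSup_image_of_isLUB
    (arch : ∀ x y : G, (∀ n : ℕ, n • x ≤ y) → x ≤ 0)
    {E : Set G} (hE0 : (0 : G) ∈ E)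
    (hEsub : ∀ x ∈ E, ∀ y ∈ E, x - y ∈ E) (hEinf : ∀ x ∈ E, ∀ y ∈ E, x ⊓ y ∈ E)
    (hdense : ∀ x : G, 0 < x → ∃ y ∈ E, 0 < y ∧ y ≤ x)
    (hmaj : ∀ x : G, ∃ y ∈ E, x ≤ y) {ν : G → ℝ}
    (hν_add : ∀ x ∈ E, ∀ y ∈ E, ν (x + y) ≤ ν x + ν y)
    (hν_mono : ∀ x ∈ E, ∀ y ∈ E, |x| ≤ |y| → ν x ≤ ν y)
    {Et : Set G} (hEEt : E ⊆ Et) (hEtinf : ∀ x ∈ Et, ∀ y ∈ Et, x ⊓ y ∈ Et)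
    (hEt : ∀ x ∈ Et, upperNorm E ν x = lowerNorm E ν x)
    (hoc : ∀ D : Set G, D.Nonempty → D ⊆ E → (∀ d ∈ D, 0 ≤ d) →
      DirectedOn (· ≥ ·) D → IsGLB D 0 → sInf (ν '' D) = 0)
    {D : Set G} (hDne : D.Nonempty) (hDEt : D ⊆ Et) (hDpos : ∀ d ∈ D, 0 ≤ d)
    (hDdir : DirectedOn (· ≤ ·) D) {x : G} (hD : IsLUB D x) :
    lowerNorm E ν x ≤ sSup (lowerNorm E ν '' D) := by
  obtain ⟨d₀, hd₀⟩ := hDne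
  have hx0 : 0 ≤ x := (hDpos d₀ hd₀).trans (hD.1 hd₀)
  have hbdd : BddAbove (lowerNorm E ν '' D) := ⟨lowerNorm E ν x, by
    rintro _ ⟨d, hd, rfl⟩
    exact lowerNorm_le_lowerNorm hE0 hmaj hν_mono (abs_le_abs_of_nonneg (hDpos d hd) (hD.1 hd))⟩
  refine csSup_le ⟨ν 0, 0, ⟨hE0, le_rfl, abs_nonneg x⟩, rfl⟩ ?_
  rintro _ ⟨z, ⟨hzE, hz0, hzx⟩, rfl⟩
  rw [abs_of_nonneg hx0] at hzx
  refine le_of_forall_pos_lt_add fun ε hε => ?_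
  obtain ⟨w, ⟨hwE, d, hd, hzw⟩, hwε⟩ := exists_mem_uncoveredMajorants_lt arch hEsub hEinf
    hdense hmaj hoc ⟨d₀, hd₀⟩ hDdir hD hzx hε
  have hzd0 : 0 ≤ z ⊓ d := le_inf hz0 (hDpos d hd)
  calc ν z ≤ upperNorm E ν (z ⊓ d) + ν w :=
        le_upperNorm_add hEsub hEinf hν_add hν_mono hzE hwE hzd0 inf_le_left hzw
    _ = lowerNorm E ν (z ⊓ d) + ν w := by rw [hEt _ (hEtinf _ (hEEt hzE) _ (hDEt hd))]
    _ < lowerNorm E ν d + ε := add_lt_add_of_le_of_lt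
        (lowerNorm_le_lowerNorm hE0 hmaj hν_mono (abs_le_abs_of_nonneg hzd0 inf_le_right)) hwε
    _ ≤ sSup (lowerNorm E ν '' D) + ε := by gcongr; exact le_csSup hbdd ⟨d, hd, rfl⟩

end LatticeNorm

theorem stmt8_general
    {G : Type*} [Lattice G] [AddCommGroup G] [Module ℝ G]
    [CovariantClass G G (· + ·) (· ≤ ·)]
    (arch : ∀ x y : G, (∀ n : ℕ, n • x ≤ y) → x ≤ 0)
    (E : Set G)
    (hE0 : (0 : G) ∈ E)
    (hEadd : ∀ x ∈ E, ∀ y ∈ E, x + y ∈ E)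
    (hEsmul : ∀ (c : ℝ), ∀ x ∈ E, c • x ∈ E)
    (hEinf : ∀ x ∈ E, ∀ y ∈ E, x ⊓ y ∈ E)
    (hdense : ∀ x : G, 0 < x → ∃ y ∈ E, 0 < y ∧ y ≤ x)
    (hmaj : ∀ x : G, ∃ y ∈ E, x ≤ y)
    (ν : G → ℝ)
    (hν_add : ∀ x ∈ E, ∀ y ∈ E, ν (x + y) ≤ ν x + ν y)
    (hν_mono : ∀ x ∈ E, ∀ y ∈ E, |x| ≤ |y| → ν x ≤ ν y)
    (ρ : G → ℝ)
    (hρ : ∀ x : G, ρ x = sSup (ν '' {z | z ∈ E ∧ 0 ≤ z ∧ z ≤ |x|}))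
    (ι : G → ℝ)
    (hι : ∀ x : G, ι x = sInf (ν '' {y | y ∈ E ∧ |x| ≤ y}))
    (Et : Set G)
    (hEEt : E ⊆ Et)
    (hEtinf : ∀ x ∈ Et, ∀ y ∈ Et, x ⊓ y ∈ Et)
    (hEt : ∀ x ∈ Et, ι x = ρ x)
    (hoc : ∀ D : Set G, D.Nonempty → D ⊆ E → (∀ d ∈ D, 0 ≤ d) →
      DirectedOn (· ≥ ·) D → IsGLB D 0 → sInf (ν '' D) = 0)
    :
    ∀ D : Set G, D.Nonempty → D ⊆ Et → (∀ d ∈ D, 0 ≤ d) → DirectedOn (· ≤ ·) D →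
      ∀ x ∈ Et, IsLUB D x → sSup (ρ '' D) = ρ x := by
  obtain rfl : ρ = lowerNorm E ν := funext hρ
  obtain rfl : ι = upperNorm E ν := funext hι
  have hEsub : ∀ x ∈ E, ∀ y ∈ E, x - y ∈ E := fun x hx y hy => by
    simpa [sub_eq_add_neg] using hEadd x hx _ (hEsmul (-1) y hy)
  intro D hDne hDEt hDpos hDdir x _ hD
  refine le_antisymm (csSup_le (hDne.image _) ?_) (lowerNorm_le_sSup_image_of_isLUB arch hE0
    hEsub hEinf hdense hmaj hν_add hν_mono hEEt hEtinf hEt hoc hDne hDEt hDpos hDdir hD)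
  rintro _ ⟨d, hd, rfl⟩
  exact lowerNorm_le_lowerNorm hE0 hmaj hν_mono (abs_le_abs_of_nonneg (hDpos d hd) (hD.1 hd))

theorem stmt8
    {G : Type*} [Lattice G] [AddCommGroup G] [Module ℝ G]
    [CovariantClass G G (· + ·) (· ≤ ·)] [PosSMulMono ℝ G]
    (arch : ∀ x y : G, (∀ n : ℕ, n • x ≤ y) → x ≤ 0)
    (E : Set G)
    (hE0 : (0 : G) ∈ E)
    (hEadd : ∀ x ∈ E, ∀ y ∈ E, x + y ∈ E)
    (hEsmul : ∀ (c : ℝ), ∀ x ∈ E, c • x ∈ E)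
    (hEsup : ∀ x ∈ E, ∀ y ∈ E, x ⊔ y ∈ E)
    (hEinf : ∀ x ∈ E, ∀ y ∈ E, x ⊓ y ∈ E)
    (hdense : ∀ x : G, 0 < x → ∃ y ∈ E, 0 < y ∧ y ≤ x)
    (hmaj : ∀ x : G, ∃ y ∈ E, x ≤ y)
    (ν : G → ℝ)
    (hν_zero : ∀ x ∈ E, (ν x = 0 ↔ x = 0))
    (hν_smul : ∀ (c : ℝ), ∀ x ∈ E, ν (c • x) = |c| * ν x)
    (hν_add : ∀ x ∈ E, ∀ y ∈ E, ν (x + y) ≤ ν x + ν y)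
    (hν_mono : ∀ x ∈ E, ∀ y ∈ E, |x| ≤ |y| → ν x ≤ ν y)
    (ρ : G → ℝ)
    (hρ : ∀ x : G, ρ x = sSup (ν '' {z | z ∈ E ∧ 0 ≤ z ∧ z ≤ |x|}))
    (ι : G → ℝ)
    (hι : ∀ x : G, ι x = sInf (ν '' {y | y ∈ E ∧ |x| ≤ y}))
    (Et : Set G)
    (hEEt : E ⊆ Et)
    (hEtadd : ∀ x ∈ Et, ∀ y ∈ Et, x + y ∈ Et)
    (hEtsmul : ∀ (c : ℝ), ∀ x ∈ Et, c • x ∈ Et)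
    (hEtsup : ∀ x ∈ Et, ∀ y ∈ Et, x ⊔ y ∈ Et)
    (hEtinf : ∀ x ∈ Et, ∀ y ∈ Et, x ⊓ y ∈ Et)
    (hEt : ∀ x ∈ Et, ι x = ρ x)
    (hoc : ∀ D : Set G, D.Nonempty → D ⊆ E → (∀ d ∈ D, 0 ≤ d) →
      DirectedOn (· ≥ ·) D → IsGLB D 0 → sInf (ν '' D) = 0)
    :
    ∀ D : Set G, D.Nonempty → D ⊆ Et → (∀ d ∈ D, 0 ≤ d) → DirectedOn (· ≤ ·) D →
      ∀ x ∈ Et, IsLUB D x → sSup (ρ '' D) = ρ x :=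
  stmt8_general arch E hE0 hEadd hEsmul hEinf hdense hmaj ν hν_add hν_mono ρ hρ ι hι Et hEEt hEtinf
    hEt hoc
end

section
/- Let T : E → F be a positive, order continuous linear operator, let x ∈ G with x ≥ 0, and let D be a nonempty downward-directed set of positive elements of E whose infimum in G is x. Then the infimum in F of {T(d) : d ∈ D} exists and equals sup{T(z) : z ∈ E, 0 ≤ z ≤ x} (the value of the canonical extension of T at x). -/
/-!
Let `S = E ∩ [0, x]`. Order density of `E` and the Archimedean property give `sup S = x` in `G`
(a positive gap `x - x ⊓ u` below an upper bound `u` would contain some `0 < y ∈ E`, and then all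
multiples `n • y` would lie in `S`). Hence `D - S` is a downward directed subset of `E` with
infimum `x - x = 0`, so order continuity gives `inf (T D - T S) = inf T (D - S) = 0`, which in
the Dedekind complete space `F` says exactly `inf T D = sup T S`.
-/

open Set
open scoped Pointwise

theorem DirectedOn.sub {α : Type*} [AddCommGroup α] [PartialOrder α] [AddLeftMono α]
    {s t : Set α} (hs : DirectedOn (· ≥ ·) s) (ht : DirectedOn (· ≤ ·) t) :
    DirectedOn (· ≥ ·) (s - t) := by
  rintro _ ⟨a, ha, b, hb, rfl⟩ _ ⟨a', ha', b', hb', rfl⟩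
  obtain ⟨c, hc, hac, ha'c⟩ := hs a ha a' ha'
  obtain ⟨d, hd, hbd, hb'd⟩ := ht b hb b' hb'
  exact ⟨c - d, sub_mem_sub hc hd, sub_le_sub hac hbd, sub_le_sub ha'c hb'd⟩

theorem image_sub_of_map_sub {α β : Type*} [Sub α] [Sub β] {f : β → α} {s t : Set β}
    (hf : ∀ a ∈ s, ∀ b ∈ t, f (a - b) = f a - f b) : f '' (s - t) = f '' s - f '' t := by
  ext y
  simp only [mem_image, mem_sub]
  constructor
  · rintro ⟨_, ⟨a, ha, b, hb, rfl⟩, rfl⟩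
    exact ⟨f a, ⟨a, ha, rfl⟩, f b, ⟨b, hb, rfl⟩, (hf a ha b hb).symm⟩
  · rintro ⟨_, ⟨a, ha, rfl⟩, _, ⟨b, hb, rfl⟩, rfl⟩
    exact ⟨a - b, ⟨a, ha, b, hb, rfl⟩, hf a ha b hb⟩

theorem exists_isLUB_isGLB_of_isGLB_sub {α : Type*} [ConditionallyCompleteLattice α]
    [AddCommGroup α] [AddLeftMono α] {s t : Set α} (hs : s.Nonempty) (ht : t.Nonempty)
    (h : IsGLB (t - s) 0) : ∃ v, IsLUB s v ∧ IsGLB t v := by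
  have hle : ∀ a ∈ s, ∀ b ∈ t, a ≤ b := fun a ha b hb =>
    sub_nonneg.1 (h.1 (sub_mem_sub hb ha))
  obtain ⟨a₀, ha₀⟩ := hs
  obtain ⟨b₀, hb₀⟩ := ht
  have hlub := isLUB_csSup ⟨a₀, ha₀⟩ ⟨b₀, fun a ha => hle a ha b₀ hb₀⟩
  have hglb := isGLB_csInf ⟨b₀, hb₀⟩ ⟨a₀, fun b hb => hle a₀ ha₀ b hb⟩
  have hsub : sInf t - sSup s = 0 := (hglb.sub hlub).unique h
  exact ⟨sSup s, hlub, sub_eq_zero.1 hsub ▸ hglb⟩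

theorem isLUB_inter_Icc_of_orderDense {G : Type*} [Lattice G] [AddCommGroup G] [AddLeftMono G]
    (arch : ∀ x y : G, (∀ n : ℕ, n • x ≤ y) → x ≤ 0)
    {E : Set G} (hE0 : (0 : G) ∈ E) (hEadd : ∀ x ∈ E, ∀ y ∈ E, x + y ∈ E)
    (hdense : ∀ x : G, 0 < x → ∃ y ∈ E, 0 < y ∧ y ≤ x) {x : G} (hx : 0 ≤ x) :
    IsLUB (E ∩ Icc 0 x) x := by
  refine ⟨fun z hz => hz.2.2, fun u hu => ?_⟩
  by_contra hxu
  have hgap : 0 < x - x ⊓ u := sub_pos.2 (inf_le_left.lt_of_ne (mt inf_eq_left.1 hxu))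
  obtain ⟨y, hyE, hy, hyx⟩ := hdense _ hgap
  have hmul : ∀ n : ℕ, n • y ∈ E ∩ Icc 0 x := by
    intro n
    induction n with
    | zero => simpa using ⟨hE0, hx⟩
    | succ n ih =>
      rw [succ_nsmul]
      refine ⟨hEadd _ ih.1 _ hyE, add_nonneg ih.2.1 hy.le, ?_⟩
      calc n • y + y ≤ x ⊓ u + (x - x ⊓ u) := add_le_add (le_inf ih.2.2 (hu ih)) hyx
        _ = x := add_sub_cancel _ _
  exact hy.not_ge (arch y x fun n => (hmul n).2.2)

theorem stmt14_general
    {G : Type*} [Lattice G] [AddCommGroup G] [Module ℝ G]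
    [CovariantClass G G (· + ·) (· ≤ ·)]
    (arch : ∀ x y : G, (∀ n : ℕ, n • x ≤ y) → x ≤ 0)
    (E : Set G)
    (hE0 : (0 : G) ∈ E)
    (hEadd : ∀ x ∈ E, ∀ y ∈ E, x + y ∈ E)
    (hEsmul : ∀ (c : ℝ), ∀ x ∈ E, c • x ∈ E)
    (hEsup : ∀ x ∈ E, ∀ y ∈ E, x ⊔ y ∈ E)
    (hdense : ∀ x : G, 0 < x → ∃ y ∈ E, 0 < y ∧ y ≤ x)
    {F : Type*} [ConditionallyCompleteLattice F] [AddCommGroup F]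
    [CovariantClass F F (· + ·) (· ≤ ·)]
    (T : G → F)
    (hT_add : ∀ x ∈ E, ∀ y ∈ E, T (x + y) = T x + T y)
    (hT_oc : ∀ D : Set G, D.Nonempty → D ⊆ E → DirectedOn (· ≥ ·) D →
      IsGLB D 0 → IsGLB (T '' D) 0)
    :
    ∀ x : G, 0 ≤ x → ∀ D : Set G, D.Nonempty → D ⊆ E → (∀ d ∈ D, 0 ≤ d) →
      DirectedOn (· ≥ ·) D → IsGLB D x →
      ∃ v : F, IsLUB (T '' {z | z ∈ E ∧ 0 ≤ z ∧ z ≤ x}) v ∧ IsGLB (T '' D) v := by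
  intro x hx D hDne hDE _ hDdir hDglb
  set S : Set G := E ∩ Icc 0 x
  have hEsub : ∀ a ∈ E, ∀ b ∈ E, a - b ∈ E := fun a ha b hb => by
    simpa [sub_eq_add_neg] using hEadd a ha _ (hEsmul (-1) b hb)
  have hT_sub : ∀ a ∈ E, ∀ b ∈ E, T (a - b) = T a - T b := fun a ha b hb =>
    eq_sub_of_add_eq (by rw [← hT_add _ (hEsub a ha b hb) b hb, sub_add_cancel])
  have hSne : S.Nonempty := ⟨0, hE0, le_rfl, hx⟩
  have hSdir : DirectedOn (· ≤ ·) S := SupClosed.directedOn fun a ha b hb =>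
    ⟨hEsup a ha.1 b hb.1, le_sup_of_le_left ha.2.1, sup_le ha.2.2 hb.2.2⟩
  have hDSglb : IsGLB (D - S) 0 := by
    simpa using hDglb.sub (isLUB_inter_Icc_of_orderDense arch hE0 hEadd hdense hx)
  have hDSE : D - S ⊆ E := by
    rintro _ ⟨d, hd, z, hz, rfl⟩
    exact hEsub d (hDE hd) z hz.1
  have hTDS := hT_oc _ (hDne.sub hSne) hDSE (hDdir.sub hSdir) hDSglb
  rw [image_sub_of_map_sub fun d hd z hz => hT_sub d (hDE hd) z hz.1] at hTDS
  exact exists_isLUB_isGLB_of_isGLB_sub (hSne.image T) (hDne.image T) hTDS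

theorem stmt14
    {G : Type*} [Lattice G] [AddCommGroup G] [Module ℝ G]
    [CovariantClass G G (· + ·) (· ≤ ·)] [PosSMulMono ℝ G]
    (arch : ∀ x y : G, (∀ n : ℕ, n • x ≤ y) → x ≤ 0)
    (E : Set G)
    (hE0 : (0 : G) ∈ E)
    (hEadd : ∀ x ∈ E, ∀ y ∈ E, x + y ∈ E)
    (hEsmul : ∀ (c : ℝ), ∀ x ∈ E, c • x ∈ E)
    (hEsup : ∀ x ∈ E, ∀ y ∈ E, x ⊔ y ∈ E)
    (hEinf : ∀ x ∈ E, ∀ y ∈ E, x ⊓ y ∈ E)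
    (hdense : ∀ x : G, 0 < x → ∃ y ∈ E, 0 < y ∧ y ≤ x)
    (hmaj : ∀ x : G, ∃ y ∈ E, x ≤ y)
    {F : Type*} [ConditionallyCompleteLattice F] [AddCommGroup F] [Module ℝ F]
    [CovariantClass F F (· + ·) (· ≤ ·)] [PosSMulMono ℝ F]
    (T : G → F)
    (hT_add : ∀ x ∈ E, ∀ y ∈ E, T (x + y) = T x + T y)
    (hT_smul : ∀ (c : ℝ), ∀ x ∈ E, T (c • x) = c • T x)
    (hT_pos : ∀ x ∈ E, 0 ≤ x → 0 ≤ T x)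
    (hT_oc : ∀ D : Set G, D.Nonempty → D ⊆ E → DirectedOn (· ≥ ·) D →
      IsGLB D 0 → IsGLB (T '' D) 0)
    :
    ∀ x : G, 0 ≤ x → ∀ D : Set G, D.Nonempty → D ⊆ E → (∀ d ∈ D, 0 ≤ d) →
      DirectedOn (· ≥ ·) D → IsGLB D x →
      ∃ v : F, IsLUB (T '' {z | z ∈ E ∧ 0 ≤ z ∧ z ≤ x}) v ∧ IsGLB (T '' D) v :=
  stmt14_general arch E hE0 hEadd hEsmul hEsup hdense T hT_add hT_oc
end
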